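/- For every integer n ≥ 0, γ_{\widetilde{H}}(n) = (−1)^n Σ_{k=0}^n C(n,k) b_k c_{n−k}, where b_k is the k-th derivative of s ↦ 1/Γ(s) at s = 1 and c_k = ∫_0^∞ log(1 + e^{−x}) log^k(x) / (1 + e^{−x}) dx. -/

import Mathlib

/-!
Substituting `x = e^{-t}` in `log (1 + x) / (1 + x) = ∑ (-1)^k H_{k+1} x^{k+1}` and integrating
termwise shows that the Mellin transform `M` of `K(t) = log (1 + e^{-t}) / (1 + e^{-t})` equals
`Γ(s) ζ_{H̃}(s)` for `Re s > 2`. Since `K` decays exponentially and is bounded near `0`, `M` is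
holomorphic on `Re s > 0` with `M⁽ᵐ⁾(s)` the Mellin transform of `logᵐ t · K(t)`, which at `s = 1`
is `c_m`. By the identity theorem `ζ_{H̃} = (1/Γ) · M` on `Re s > 0`, and the Leibniz rule at
`s = 1` gives the formula.
-/

open Filter Finset MeasureTheory

/-- The harmonic number `H_n = ∑_{k=1}^n 1/k` (so `Hnum n = ∑_{k<n} 1/(k+1)`). -/
noncomputable def Hnum (n : ℕ) : ℝ := ∑ k ∈ Finset.range n, 1 / ((k : ℝ) + 1)

/-- `b_k`, the `k`-th derivative of `s ↦ 1/Γ(s)` at `s = 1`. -/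
noncomputable def bconst (k : ℕ) : ℂ := iteratedDeriv k (fun s : ℂ => 1 / Complex.Gamma s) 1

/-- `c_k = ∫_0^∞ log(1+e^{-x}) log^k(x) / (1+e^{-x}) dx`. -/
noncomputable def cconst (k : ℕ) : ℝ :=
  ∫ x in Set.Ioi (0 : ℝ), Real.log (1 + Real.exp (-x)) * Real.log x ^ k / (1 + Real.exp (-x))

open Topology Asymptotics Set

lemma Hnum_nonneg (n : ℕ) : 0 ≤ Hnum n :=
  Finset.sum_nonneg fun _ _ => by positivity

lemma Hnum_le_self (n : ℕ) : Hnum n ≤ n := by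
  calc Hnum n ≤ ∑ _k ∈ Finset.range n, (1 : ℝ) :=
        Finset.sum_le_sum fun k _ => div_le_one_of_le₀ (by linarith [k.cast_nonneg' (α := ℝ)])
          (by positivity)
    _ = n := by simp

lemma sum_range_succ_one_div_sub_add_one (n : ℕ) :
    ∑ k ∈ Finset.range (n + 1), 1 / (((n - k : ℕ) : ℝ) + 1) = Hnum (n + 1) := by
  rw [← Finset.sum_range_reflect]
  refine Finset.sum_congr rfl fun k hk => ?_
  rw [Finset.mem_range] at hk
  rw [show n - (n + 1 - 1 - k) = k by omega]

/-- Cauchy product of `1/(1+x) = ∑ (-x)^j` with `log (1+x) = -∑ (-x)^(m+1)/(m+1)`. -/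
theorem hasSum_Hnum_mul_pow {x : ℝ} (hx : |x| < 1) :
    HasSum (fun k : ℕ => (-1) ^ k * Hnum (k + 1) * x ^ (k + 1))
      (Real.log (1 + x) / (1 + x)) := by
  have hx' : |-x| < 1 := by rwa [abs_neg]
  have hgeo : HasSum (fun j : ℕ => (-x) ^ j) (1 + x)⁻¹ := by
    simpa using hasSum_geometric_of_abs_lt_one hx'
  have hlog : HasSum (fun m : ℕ => -((-x) ^ (m + 1) / ((m : ℝ) + 1))) (Real.log (1 + x)) := by
    simpa using (Real.hasSum_pow_div_log_of_abs_lt_one hx').neg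
  have hgeo_norm : Summable fun j : ℕ => ‖(-x) ^ j‖ := by
    simpa [norm_pow] using summable_geometric_of_lt_one (abs_nonneg x) hx
  have hlog_norm : Summable fun m : ℕ => ‖-((-x) ^ (m + 1) / ((m : ℝ) + 1))‖ := by
    refine hgeo_norm.of_nonneg_of_le (fun _ => norm_nonneg _) fun m => ?_
    rw [norm_neg, norm_div, Real.norm_of_nonneg (by positivity : (0 : ℝ) ≤ m + 1), norm_pow,
      norm_pow, pow_succ]
    calc ‖-x‖ ^ m * ‖-x‖ / (m + 1) ≤ ‖-x‖ ^ m * ‖-x‖ :=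
          div_le_self (by positivity) (by linarith [m.cast_nonneg' (α := ℝ)])
      _ ≤ ‖-x‖ ^ m := mul_le_of_le_one_right (by positivity) (by simpa using hx.le)
  have hprod := hasSum_sum_range_mul_of_summable_norm hgeo_norm hlog_norm
  rw [hgeo.tsum_eq, hlog.tsum_eq, inv_mul_eq_div] at hprod
  refine hprod.congr_fun fun n => ?_
  have hterm : ∀ k ∈ Finset.range (n + 1),
      (-x) ^ k * -((-x) ^ (n - k + 1) / (((n - k : ℕ) : ℝ) + 1))
        = (-1) ^ n * x ^ (n + 1) * (1 / (((n - k : ℕ) : ℝ) + 1)) := fun k hk => by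
    have hsplit : (-x) ^ (n + 1) = (-x) ^ k * (-x) ^ (n - k + 1) := by
      rw [← pow_add]; congr 1; have := Finset.mem_range.1 hk; omega
    rw [mul_neg, ← mul_div_assoc, ← hsplit, neg_pow, pow_succ (-1 : ℝ)]
    ring
  rw [Finset.sum_congr rfl hterm, ← Finset.mul_sum, sum_range_succ_one_div_sub_add_one]
  ring

noncomputable def altHarmonicKernel (t : ℝ) : ℂ :=
  (Real.log (1 + Real.exp (-t)) / (1 + Real.exp (-t)) : ℝ)

lemma continuous_altHarmonicKernel : Continuous altHarmonicKernel := by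
  have hpos : ∀ t : ℝ, 1 + Real.exp (-t) ≠ 0 := fun t => by positivity
  unfold altHarmonicKernel
  fun_prop (disch := exact hpos _)

lemma norm_altHarmonicKernel_le (t : ℝ) : ‖altHarmonicKernel t‖ ≤ Real.exp (-t) := by
  have hlog_nonneg : 0 ≤ Real.log (1 + Real.exp (-t)) :=
    Real.log_nonneg (by linarith [Real.exp_pos (-t)])
  have hlog_le : Real.log (1 + Real.exp (-t)) ≤ Real.exp (-t) := by
    linarith [Real.log_le_sub_one_of_pos (by positivity : 0 < 1 + Real.exp (-t))]
  rw [altHarmonicKernel, Complex.norm_real, Real.norm_of_nonneg (by positivity)]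
  exact (div_le_self hlog_nonneg (by linarith [Real.exp_pos (-t)])).trans hlog_le

lemma altHarmonicKernel_isBigO_atTop (a : ℝ) :
    altHarmonicKernel =O[atTop] (· ^ (-a)) := by
  have hexp : altHarmonicKernel =O[atTop] fun t => Real.exp (-1 * t) :=
    .of_bound' (.of_forall fun t => by
      simpa [Real.norm_of_nonneg (Real.exp_pos _).le] using norm_altHarmonicKernel_le t)
  exact hexp.trans (isLittleO_exp_neg_mul_rpow_atTop one_pos _).isBigO

lemma altHarmonicKernel_isBigO_nhdsGT_zero :
    altHarmonicKernel =O[𝓝[>] 0] (· ^ (-(0 : ℝ))) := by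
  refine .of_bound' (eventually_nhdsWithin_of_forall fun t (ht : 0 < t) => ?_)
  simpa using (norm_altHarmonicKernel_le t).trans (Real.exp_le_one_iff.2 (by linarith))

lemma hasSum_altHarmonicKernel {t : ℝ} (ht : 0 < t) :
    HasSum (fun k : ℕ => (-1) ^ k * (Hnum (k + 1) : ℂ) * Real.exp (-((k : ℝ) + 1) * t))
      (altHarmonicKernel t) := by
  have hx : |Real.exp (-t)| < 1 := by
    rw [abs_of_pos (Real.exp_pos _)]; exact Real.exp_lt_one_iff.2 (by linarith)
  refine (Complex.hasSum_ofReal.2 (hasSum_Hnum_mul_pow hx)).congr_fun fun k => ?_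
  rw [← Real.exp_nat_mul]
  push_cast
  ring_nf

lemma rpow_neg_isBigO_rpow_neg_nhdsGT_zero {b c : ℝ} (hbc : b ≤ c) :
    (fun t : ℝ => t ^ (-b)) =O[𝓝[>] 0] (· ^ (-c)) := by
  refine .of_bound' ?_
  filter_upwards [Ioo_mem_nhdsGT (zero_lt_one' ℝ)] with t ⟨ht0, ht1⟩
  rw [Real.norm_of_nonneg (by positivity), Real.norm_of_nonneg (by positivity)]
  exact Real.rpow_le_rpow_of_exponent_ge ht0 ht1.le (by linarith)

section MellinLogPow

variable {E : Type*} [NormedAddCommGroup E] [NormedSpace ℂ E] {f : ℝ → E}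

lemma log_pow_smul_isBigO_atTop (hf : ∀ a : ℝ, f =O[atTop] (· ^ (-a))) (m : ℕ) (a : ℝ) :
    (fun t => Real.log t ^ m • f t) =O[atTop] (· ^ (-a)) := by
  induction m generalizing a with
  | zero => simpa using hf a
  | succ m ih =>
    simpa [pow_succ', mul_smul] using isBigO_rpow_top_log_smul (lt_add_one a) (ih (a + 1))

lemma log_pow_smul_isBigO_nhdsGT_zero {b : ℝ} (hf : f =O[𝓝[>] 0] (· ^ (-b))) (m : ℕ) {c : ℝ}
    (hbc : b < c) : (fun t => Real.log t ^ m • f t) =O[𝓝[>] 0] (· ^ (-c)) := by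
  induction m generalizing c with
  | zero => simpa using hf.trans (rpow_neg_isBigO_rpow_neg_nhdsGT_zero hbc.le)
  | succ m ih =>
    have hmid : (b + c) / 2 < c := by linarith
    simpa [pow_succ', mul_smul] using isBigO_rpow_zero_log_smul hmid (ih (by linarith))

lemma hasDerivAt_mellin_log_pow_smul {b : ℝ} (hfc : ContinuousOn f (Ioi 0))
    (hf_top : ∀ a : ℝ, f =O[atTop] (· ^ (-a))) (hf_bot : f =O[𝓝[>] 0] (· ^ (-b)))
    (m : ℕ) {s : ℂ} (hs : b < s.re) :
    HasDerivAt (mellin fun t => Real.log t ^ m • f t)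
      (mellin (fun t => Real.log t ^ (m + 1) • f t) s) s := by
  have hcont : ContinuousOn (fun t => Real.log t ^ m • f t) (Ioi 0) :=
    ((Real.continuousOn_log.mono fun _ ht => ne_of_gt ht).pow m).smul hfc
  have hmid : (b + s.re) / 2 < s.re := by linarith
  have := (mellin_hasDerivAt_of_isBigO_rpow (hcont.locallyIntegrableOn measurableSet_Ioi)
    (log_pow_smul_isBigO_atTop hf_top m (s.re + 1)) (lt_add_one _)
    (log_pow_smul_isBigO_nhdsGT_zero hf_bot m (by linarith : b < (b + s.re) / 2)) hmid).2
  simpa [pow_succ', mul_smul] using this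

lemma differentiableOn_mellin {b : ℝ} (hfc : ContinuousOn f (Ioi 0))
    (hf_top : ∀ a : ℝ, f =O[atTop] (· ^ (-a))) (hf_bot : f =O[𝓝[>] 0] (· ^ (-b))) :
    DifferentiableOn ℂ (mellin f) {s : ℂ | b < s.re} := fun _ hs => by
  simpa using
    (hasDerivAt_mellin_log_pow_smul hfc hf_top hf_bot 0 hs).differentiableAt.differentiableWithinAt

lemma iteratedDeriv_mellin {b : ℝ} (hfc : ContinuousOn f (Ioi 0))
    (hf_top : ∀ a : ℝ, f =O[atTop] (· ^ (-a))) (hf_bot : f =O[𝓝[>] 0] (· ^ (-b)))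
    (m : ℕ) {s : ℂ} (hs : b < s.re) :
    iteratedDeriv m (mellin f) s = mellin (fun t => Real.log t ^ m • f t) s := by
  induction m generalizing s with
  | zero => simp
  | succ m ih =>
    have hnear : iteratedDeriv m (mellin f) =ᶠ[𝓝 s] mellin fun t => Real.log t ^ m • f t :=
      eventually_of_mem ((isOpen_lt continuous_const Complex.continuous_re).mem_nhds hs)
        fun _ hz => ih hz
    rw [iteratedDeriv_succ, hnear.deriv_eq,
      (hasDerivAt_mellin_log_pow_smul hfc hf_top hf_bot m hs).deriv]

end MellinLogPow

lemma mellin_altHarmonicKernel {s : ℂ} (hs : 2 < s.re) :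
    mellin altHarmonicKernel s =
      Complex.Gamma s * ∑' k : ℕ, (-1) ^ k * (Hnum (k + 1) : ℂ) / ((k : ℂ) + 1) ^ s := by
  have hdom : Summable fun k : ℕ => ((k : ℝ) + 1) ^ (1 - s.re) := by
    simpa using (summable_nat_add_iff 1).2
      (Real.summable_nat_rpow.2 (by linarith : 1 - s.re < -1))
  have hnorm :
      Summable fun k : ℕ => ‖(-1) ^ k * (Hnum (k + 1) : ℂ)‖ / ((k : ℝ) + 1) ^ s.re := by
    refine hdom.of_nonneg_of_le (fun _ => by positivity) fun k => ?_
    rw [norm_mul, norm_pow, norm_neg, norm_one, one_pow, one_mul, Complex.norm_real,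
      Real.norm_of_nonneg (Hnum_nonneg _), Real.rpow_sub (by positivity), Real.rpow_one]
    gcongr
    exact_mod_cast Hnum_le_self (k + 1)
  have := hasSum_mellin (fun _ => .inr (by positivity)) (by linarith)
    (fun _ ht => hasSum_altHarmonicKernel ht) hnorm
  rw [← this.tsum_eq, ← tsum_mul_left]
  push_cast
  simp_rw [mul_div_assoc]

lemma mellin_log_pow_smul_altHarmonicKernel_one (m : ℕ) :
    mellin (fun t => Real.log t ^ m • altHarmonicKernel t) 1 = cconst m := by
  rw [cconst, ← integral_complex_ofReal, mellin]
  refine setIntegral_congr_fun measurableSet_Ioi fun t _ => ?_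
  simp only [sub_self, Complex.cpow_zero, one_smul, altHarmonicKernel, Complex.real_smul]
  push_cast
  ring

lemma eqOn_one_div_Gamma_mul_mellin_altHarmonicKernel {F : ℂ → ℂ}
    (hFanal : AnalyticOnNhd ℂ F {s : ℂ | 0 < s.re})
    (hFval : ∀ s : ℂ, 1 < s.re →
      F s = ∑' k : ℕ, (-1) ^ k * (Hnum (k + 1) : ℂ) / ((k : ℂ) + 1) ^ s) :
    EqOn F (fun s => 1 / Complex.Gamma s * mellin altHarmonicKernel s) {s : ℂ | 0 < s.re} := by
  have hopen : IsOpen {s : ℂ | 0 < s.re} := isOpen_lt continuous_const Complex.continuous_re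
  have hG : AnalyticOnNhd ℂ (fun s => 1 / Complex.Gamma s * mellin altHarmonicKernel s)
      {s : ℂ | 0 < s.re} := by
    have hGamma : DifferentiableOn ℂ (fun s => 1 / Complex.Gamma s) {s : ℂ | 0 < s.re} := by
      simpa using Complex.differentiable_one_div_Gamma.differentiableOn
    refine DifferentiableOn.analyticOnNhd ?_ hopen
    exact hGamma.mul
      (differentiableOn_mellin continuous_altHarmonicKernel.continuousOn
        altHarmonicKernel_isBigO_atTop altHarmonicKernel_isBigO_nhdsGT_zero)
  have hnear : F =ᶠ[𝓝 3] fun s => 1 / Complex.Gamma s * mellin altHarmonicKernel s := by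
    filter_upwards [(isOpen_lt continuous_const Complex.continuous_re).mem_nhds
      (by norm_num : (3 : ℂ) ∈ {s : ℂ | 2 < s.re})] with s (hs : 2 < s.re)
    rw [hFval s (by linarith), mellin_altHarmonicKernel hs, ← mul_assoc, one_div,
      inv_mul_cancel₀ (Complex.Gamma_ne_zero_of_re_pos (by linarith)), one_mul]
  exact hFanal.eqOn_of_preconnected_of_eventuallyEq hG
    (convex_halfSpace_re_gt 0).isPreconnected (by norm_num) hnear

theorem stmt15 (n : ℕ)
    -- `F` is the analytic continuation of `ζ_{H̃}(s) = ∑ (-1)^{n-1} H_n/n^s` to `Re(s) > 0`,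
    -- and `γ_{H̃}(n) = (-1)^n F⁽ⁿ⁾(1)`
    (F : ℂ → ℂ)
    (hFanal : AnalyticOnNhd ℂ F {s : ℂ | 0 < s.re})
    (hFval : ∀ s : ℂ, 1 < s.re →
      F s = ∑' k : ℕ, (-1) ^ k * (Hnum (k + 1) : ℂ) / ((k : ℂ) + 1) ^ s) :
    (-1) ^ n * iteratedDeriv n F 1
      = (-1) ^ n * ∑ k ∈ Finset.range (n + 1),
          (n.choose k : ℂ) * bconst k * (cconst (n - k) : ℂ) := by
  have hopen : IsOpen {s : ℂ | 0 < s.re} := isOpen_lt continuous_const Complex.continuous_re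
  have hone : (1 : ℂ) ∈ {s : ℂ | 0 < s.re} := by norm_num
  have hnear : F =ᶠ[𝓝 1] fun s => 1 / Complex.Gamma s * mellin altHarmonicKernel s :=
    eventually_of_mem (hopen.mem_nhds hone)
      (eqOn_one_div_Gamma_mul_mellin_altHarmonicKernel hFanal hFval)
  have hmellin := differentiableOn_mellin continuous_altHarmonicKernel.continuousOn
    altHarmonicKernel_isBigO_atTop altHarmonicKernel_isBigO_nhdsGT_zero
  rw [hnear.iteratedDeriv_eq, iteratedDeriv_fun_mul
    (by simpa using Complex.differentiable_one_div_Gamma.contDiff.contDiffAt)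
    ((hmellin.contDiffOn hopen).contDiffAt (hopen.mem_nhds hone))]
  refine congrArg _ (Finset.sum_congr rfl fun k _ => ?_)
  rw [iteratedDeriv_mellin continuous_altHarmonicKernel.continuousOn
    altHarmonicKernel_isBigO_atTop altHarmonicKernel_isBigO_nhdsGT_zero _ (by norm_num),
    mellin_log_pow_smul_altHarmonicKernel_one, bconst]
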